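/- arXiv:2605.02499 — 4 statements merged into one kernel-verified Lean document; each statement's English description precedes it below -/
import Mathlib

section
/- Factorial moment duality in semigroup form (Theorem 2.2): For every real t ≥ 0 one has Matrix.exp(t • Q_X) * H = H * (Matrix.exp(t • Q_Z))ᵀ, where Q_X, Q_Z and H are the rate matrices and duality matrix defined in the context. Equivalently, for every initial number i ∈ {0,…,N} of unfit individuals and every sample size n ∈ {0,…,N} ∪ {Δ}, the expectation of (X_t)^{\underline{n}}/N^{\underline{n}} under the Moran semigroup started at i equals the expectation of i^{\underline{Z_t}}/N^{\underline{Z_t}} under the dual semigroup started at n (with the convention i^{\underline{Δ}}/N^{\underline{Δ}} = 0). -/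
open scoped BigOperators Matrix

noncomputable section

/-- `pp N n m j` is the probability `p^n_{mj}` that, when sampling `m` times with
replacement from `Fin N`, exactly `j` of the last `N - n` elements of `Fin N`
(those with indices in `{n, …, N-1}`) lie in the range of the sample. -/
def pp (N n m j : ℕ) : ℝ :=
  ((Finset.univ.filter fun f : Fin m → Fin N =>
      (Finset.univ.filter fun x : Fin N => n ≤ (x : ℕ) ∧ ∃ y, f y = x).card = j).card : ℝ)
    / (N : ℝ) ^ m

/-- Upward (birth) rate of the Moran model: non-interactive neutral reproduction,
interactive neutral reproduction and deleterious mutation. -/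
def birthX (N : ℕ) (r κ u ν₁ : ℝ) (i : ℕ) : ℝ :=
  r / 2 * ((N : ℝ) - i) * ((i : ℝ) / N)
    + κ / 2 * ((N : ℝ) - i) * ((i : ℝ) / N) * (((N : ℝ) - i) / N)
    + ((N : ℝ) - i) * u * ν₁

/-- Downward (death) rate of the Moran model: non-interactive neutral reproduction,
interactive neutral reproduction, beneficial mutation and fittest-type-wins selection. -/
def deathX (N : ℕ) (r κ u ν₀ : ℝ) (s : ℕ → ℝ) (i : ℕ) : ℝ :=
  r / 2 * i * (((N : ℝ) - i) / N)
    + κ / 2 * i * (((N : ℝ) - i) / N) ^ 2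
    + i * u * ν₀
    + ∑' m : ℕ, s m * i * (1 - ((i : ℝ) / N) ^ m)

/-- Rate matrix `Q_X` of the Moran model with interactive neutral reproduction,
fittest-type-wins selection and mutation, on states `{0, …, N}`. -/
def QX (N : ℕ) (r κ u ν₀ ν₁ : ℝ) (s : ℕ → ℝ) :
    Matrix (Fin (N + 1)) (Fin (N + 1)) ℝ :=
  Matrix.of fun i j =>
    if (j : ℕ) = (i : ℕ) + 1 then birthX N r κ u ν₁ i
    else if (j : ℕ) + 1 = (i : ℕ) then deathX N r κ u ν₀ s i
    else if i = j then -birthX N r κ u ν₁ i - deathX N r κ u ν₀ s i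
    else 0

/-- Off-diagonal rates of the dual chain `Z^{(N)}`; row `n ∈ {0,…,N}`,
column `c ∈ {0,…,N} ∪ {Δ}` (`none` encodes the cemetery state `Δ`). -/
def qzOff (N : ℕ) (r κ u ν₀ ν₁ : ℝ) (s : ℕ → ℝ) (n : ℕ) :
    Option (Fin (N + 1)) → ℝ
  | none => u * ν₀ * n
  | some m =>
      if (m : ℕ) = n + 1 then
        κ / N * (n.choose 2 : ℝ) * (((N : ℝ) - n) / N)
          + n * ∑' k : ℕ, s k * pp N n k 1
      else if (m : ℕ) + 1 = n then
        1 / N * (n.choose 2 : ℝ) * (r + κ * (((N : ℝ) - n + 1) / N))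
          + u * ν₁ * n
      else if n + 2 ≤ (m : ℕ) then
        n * ∑' k : ℕ, s k * pp N n k ((m : ℕ) - n)
      else 0

/-- Rate matrix `Q_Z` of the dual chain on `{0,…,N} ∪ {Δ}`: the diagonal entry of
row `n` is minus the sum of all other entries of that row, and the row of `Δ` is zero. -/
def QZ (N : ℕ) (r κ u ν₀ ν₁ : ℝ) (s : ℕ → ℝ) :
    Matrix (Option (Fin (N + 1))) (Option (Fin (N + 1))) ℝ :=
  Matrix.of fun row col =>
    match row with
    | none => 0
    | some n =>
        if col = some n then
          -∑ c : Option (Fin (N + 1)), qzOff N r κ u ν₀ ν₁ s (n : ℕ) c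
        else qzOff N r κ u ν₀ ν₁ s (n : ℕ) col

/-- Duality matrix `H(i, n) = i^{\underline n} / N^{\underline n}`, `H(i, Δ) = 0`. -/
def Hmat (N : ℕ) : Matrix (Fin (N + 1)) (Option (Fin (N + 1))) ℝ :=
  Matrix.of fun i c =>
    match c with
    | none => 0
    | some n => (Nat.descFactorial (i : ℕ) (n : ℕ) : ℝ) / (Nat.descFactorial N (n : ℕ) : ℝ)


namespace FMD

open Finset

/-! ### Basic descFactorial facts -/

def hh (N a k : ℕ) : ℝ := (a.descFactorial k : ℝ) / (N.descFactorial k : ℝ)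

lemma castDF_succ (a k : ℕ) :
    ((a.descFactorial (k+1) : ℕ) : ℝ) = ((a:ℝ) - k) * (a.descFactorial k : ℝ) := by
  rcases le_or_gt k a with h | h
  · rw [Nat.descFactorial_succ, Nat.cast_mul, Nat.cast_sub h]
  · rw [Nat.descFactorial_eq_zero_iff_lt.2 (by omega),
      Nat.descFactorial_eq_zero_iff_lt.2 h]
    simp

lemma castDF_succ' (a k : ℕ) :
    (((a+1).descFactorial (k+1) : ℕ) : ℝ) = ((a:ℝ) + 1) * (a.descFactorial k : ℝ) := by
  rw [Nat.succ_descFactorial_succ, Nat.cast_mul]; push_cast; ring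

lemma DF_ne_zero {N k : ℕ} (h : k ≤ N) : ((N.descFactorial k : ℕ) : ℝ) ≠ 0 := by
  have : N.descFactorial k ≠ 0 := by
    intro h0
    exact absurd (Nat.descFactorial_eq_zero_iff_lt.1 h0) (by omega)
  exact_mod_cast this

lemma hh_zero (N a : ℕ) : hh N a 0 = 1 := by simp [hh]

lemma hh_lt {N a k : ℕ} (h : a < k) : hh N a k = 0 := by
  simp [hh, Nat.descFactorial_eq_zero_iff_lt.2 h]

/-! ### Micro identities -/

lemma M3 {N i n : ℕ} (hi : i ≤ N) (hn : n ≤ N) :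
    ((N:ℝ) - n) * hh N i (n+1) = ((i:ℝ) - n) * hh N i n := by
  rcases lt_or_eq_of_le hn with h | rfl
  · unfold hh
    rw [castDF_succ, castDF_succ]
    have h1 : ((N.descFactorial n : ℕ) : ℝ) ≠ 0 := DF_ne_zero hn
    have h2 : ((N:ℝ) - n) ≠ 0 := by
      have : (n:ℝ) < N := by exact_mod_cast h
      linarith
    field_simp
  · rw [sub_self, zero_mul]
    rcases lt_or_eq_of_le hi with h | rfl
    · rw [hh_lt h, mul_zero]
    · rw [sub_self, zero_mul]

lemma M2 {N i n : ℕ} (hn : n ≤ N) :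
    (i:ℝ) * (hh N (i-1) n - hh N i n) = -(n:ℝ) * hh N i n := by
  have hd := DF_ne_zero hn
  unfold hh
  rw [div_sub_div_same, ← mul_div_assoc, ← mul_div_assoc, div_eq_div_iff hd hd]
  rcases i with _ | i'
  · rcases n with _ | n' <;> simp
  · rcases n with _ | n'
    · simp
    · have e2 := castDF_succ i' n'
      have e3 := castDF_succ' i' n'
      simp only [Nat.add_sub_cancel]
      rw [e3, e2]
      push_cast
      ring

lemma M1 {N i n : ℕ} (hn : n ≤ N) :
    ((N:ℝ) - i) * (hh N (i+1) n - hh N i n) = (n:ℝ) * (hh N i (n-1) - hh N i n) := by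
  rcases n with _ | n'
  · simp [hh_zero]
  · have hn' : n' ≤ N := by omega
    have h1 := DF_ne_zero hn'
    have h2 := DF_ne_zero hn
    unfold hh
    simp only [Nat.add_sub_cancel]
    rw [castDF_succ' i n', castDF_succ i n', castDF_succ N n']
    have h3 : ((N:ℝ) - n') ≠ 0 := by
      have : (n':ℝ) < N := by exact_mod_cast (by omega : n' < N)
      linarith
    field_simp
    push_cast
    ring

lemma R2 {N i n : ℕ} (hi : i ≤ N) (hn : n ≤ N) :
    ((N:ℝ) - n) * (hh N i (n+1) - hh N i n) = ((i:ℝ) - N) * hh N i n := by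
  linear_combination M3 hi hn

lemma Q1 {N i n : ℕ} (hn : n ≤ N) :
    ((i:ℝ) - n + 1) * (hh N (i+1) n - hh N i n) = (n:ℝ) * hh N i n := by
  rcases n with _ | n'
  · simp [hh_zero]
  · have h2 := DF_ne_zero hn
    unfold hh
    rw [castDF_succ' i n', castDF_succ i n']
    push_cast
    field_simp
    ring

/-! ### Counting lemmas and the sampling identity -/

lemma H1 {N i t : ℕ} (hi : i ≤ N) (ht : t ≤ N) :
    (t:ℝ) * hh N i t + ((N:ℝ) - t) * hh N i (t+1) = (i:ℝ) * hh N i t := by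
  linear_combination M3 hi ht

lemma card_filter_lt (N n : ℕ) (hn : n ≤ N) :
    (univ.filter fun x : Fin N => (x:ℕ) < n).card = n := by
  have h : ∀ m ∈ Finset.range n, m < N := fun m hm => by
    have := Finset.mem_range.1 hm; omega
  have : (univ.filter fun x : Fin N => (x:ℕ) < n) = (Finset.range n).attachFin h := by
    ext x
    simp [Finset.mem_attachFin]
  rw [this, Finset.card_attachFin, Finset.card_range]

lemma card_filter_ge (N n : ℕ) :
    (univ.filter fun x : Fin N => n ≤ (x:ℕ)).card = N - n := by
  have h : ∀ m ∈ Finset.Ico n N, m < N := fun m hm => (Finset.mem_Ico.1 hm).2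
  have : (univ.filter fun x : Fin N => n ≤ (x:ℕ)) = (Finset.Ico n N).attachFin h := by
    ext x
    simp [Finset.mem_attachFin, Finset.mem_Ico, x.isLt]
  rw [this, Finset.card_attachFin, Nat.card_Ico]

lemma sum_insert_card {N i : ℕ} (hi : i ≤ N) (U : Finset (Fin N)) :
    ∑ v : Fin N, hh N i (insert v U).card = (i:ℝ) * hh N i U.card := by
  have ht : U.card ≤ N := by
    simpa using Finset.card_le_univ U
  have h1 : ∀ v ∈ U, hh N i (insert v U).card = hh N i U.card := fun v hv => by
    rw [Finset.insert_eq_self.2 hv]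
  have h2 : ∀ v ∈ Uᶜ, hh N i (insert v U).card = hh N i (U.card + 1) := fun v hv => by
    rw [Finset.card_insert_of_notMem (Finset.mem_compl.1 hv)]
  have split := (Finset.sum_filter_add_sum_filter_not univ (fun v => v ∈ U)
    (fun v => hh N i (insert v U).card)).symm
  have e1 : univ.filter (fun v => v ∈ U) = U := Finset.filter_univ_mem U
  have e2 : univ.filter (fun v => ¬ v ∈ U) = Uᶜ := by ext v; simp
  rw [e1, e2] at split
  rw [split, Finset.sum_congr rfl h1, Finset.sum_congr rfl h2,
    Finset.sum_const, Finset.sum_const, Finset.card_compl, Fintype.card_fin,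
    nsmul_eq_mul, nsmul_eq_mul, Nat.cast_sub ht]
  linear_combination H1 hi ht

def Sf {N m : ℕ} (f : Fin m → Fin N) : Finset (Fin N) :=
  univ.filter (fun x => ∃ y, f y = x)

lemma lemA {N i : ℕ} (hi : i ≤ N) :
    ∀ (m : ℕ) (T : Finset (Fin N)),
      ∑ f : Fin m → Fin N, hh N i (T ∪ Sf f).card = (i:ℝ)^m * hh N i T.card := by
  intro m
  induction m with
  | zero =>
      intro T
      have h0 : ∀ f : Fin 0 → Fin N, T ∪ Sf f = T := by
        intro f
        have : Sf f = ∅ := by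
          ext x; simp [Sf]
        rw [this, Finset.union_empty]
      rw [Finset.sum_congr rfl (fun f _ => by rw [h0 f])]
      rw [Finset.sum_const, Finset.card_univ]
      simp
  | succ m ih =>
      intro T
      rw [← Equiv.sum_comp (Fin.consEquiv (fun _ : Fin (m+1) => Fin N))
        (fun f => hh N i (T ∪ Sf f).card), Fintype.sum_prod_type]
      have hS : ∀ (v : Fin N) (g : Fin m → Fin N),
          Sf ((Fin.consEquiv (fun _ : Fin (m+1) => Fin N)) (v, g)) = insert v (Sf g) := by
        intro v g
        ext x
        simp only [Sf, Fin.consEquiv, Equiv.coe_fn_mk, Finset.mem_filter, Finset.mem_univ,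
          true_and, Finset.mem_insert, Fin.exists_fin_succ, Fin.cons_zero, Fin.cons_succ]
        constructor
        · rintro (rfl | h); · exact Or.inl rfl
          · exact Or.inr h
        · rintro (rfl | h); · exact Or.inl rfl
          · exact Or.inr h
      calc ∑ v : Fin N, ∑ g : Fin m → Fin N,
              hh N i (T ∪ Sf ((Fin.consEquiv (fun _ : Fin (m+1) => Fin N)) (v, g))).card
          = ∑ g : Fin m → Fin N, ∑ v : Fin N,
              hh N i (insert v (T ∪ Sf g)).card := by
            rw [Finset.sum_comm]
            refine Finset.sum_congr rfl fun g _ => Finset.sum_congr rfl fun v _ => ?_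
            rw [hS v g, Finset.union_insert]
        _ = ∑ g : Fin m → Fin N, (i:ℝ) * hh N i (T ∪ Sf g).card := by
            exact Finset.sum_congr rfl fun g _ => sum_insert_card hi _
        _ = (i:ℝ)^(m+1) * hh N i T.card := by
            rw [← Finset.mul_sum, ih T, pow_succ]
            ring

def cNf {N m : ℕ} (n : ℕ) (f : Fin m → Fin N) : ℕ :=
  (Finset.univ.filter fun x : Fin N => n ≤ (x : ℕ) ∧ ∃ y, f y = x).card

lemma cNf_le {N m n : ℕ} (f : Fin m → Fin N) : cNf n f ≤ N - n := by
  rw [← card_filter_ge N n]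
  apply Finset.card_le_card
  intro x hx
  simp only [Finset.mem_filter] at *
  exact ⟨hx.1, hx.2.1⟩

lemma card_T0_union {N m n : ℕ} (hn : n ≤ N) (f : Fin m → Fin N) :
    ((univ.filter fun x : Fin N => (x:ℕ) < n) ∪ Sf f).card = n + cNf n f := by
  set T0 := univ.filter fun x : Fin N => (x:ℕ) < n with hT0
  have h := Finset.card_sdiff_add_card (Sf f) T0
  have e : Sf f \ T0 = Finset.univ.filter fun x : Fin N => n ≤ (x : ℕ) ∧ ∃ y, f y = x := by
    ext x
    simp only [Finset.mem_sdiff, Sf, Finset.mem_filter, Finset.mem_univ, true_and, hT0,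
      not_lt]
    tauto
  rw [e] at h
  rw [Finset.union_comm, ← h, card_filter_lt N n hn, cNf]
  omega

lemma key_sum {N i n : ℕ} (hi : i ≤ N) (hn : n ≤ N) (m : ℕ) :
    ∑ f : Fin m → Fin N, hh N i (n + cNf n f) = (i:ℝ)^m * hh N i n := by
  have h := lemA hi m (univ.filter fun x : Fin N => (x:ℕ) < n)
  rw [card_filter_lt N n hn] at h
  rw [← h]
  exact Finset.sum_congr rfl fun f _ => by rw [card_T0_union hn f]

lemma fiber_sum {N i n m : ℕ} (hi : i ≤ N) (hn : n ≤ N) :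
    ∑ j ∈ Finset.range (N - n + 1),
      ((Finset.univ.filter fun f : Fin m → Fin N => cNf n f = j).card : ℝ) * hh N i (n + j)
      = (i:ℝ)^m * hh N i n := by
  rw [← key_sum hi hn m]
  rw [← Finset.sum_fiberwise_of_maps_to (g := cNf n) (t := Finset.range (N - n + 1))
    (fun f _ => Finset.mem_range.2 (by have := cNf_le (n := n) f; omega))
    (fun f => hh N i (n + cNf n f))]
  refine Finset.sum_congr rfl fun j _ => ?_
  rw [Finset.sum_congr rfl (fun f hf => by
    rw [(Finset.mem_filter.1 hf).2]), Finset.sum_const, nsmul_eq_mul]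

lemma P2 {N i n m : ℕ} (hN : 1 ≤ N) (hi : i ≤ N) (hn : n ≤ N) :
    ∑ j ∈ Finset.range (N - n + 1), pp N n m j * hh N i (n + j)
      = ((i:ℝ)/N)^m * hh N i n := by
  have hNm : ((N:ℝ))^m ≠ 0 := pow_ne_zero _ (by positivity)
  rw [div_pow, div_mul_eq_mul_div, ← fiber_sum (m := m) hi hn, Finset.sum_div]
  refine Finset.sum_congr rfl fun j _ => ?_
  rw [pp]
  unfold cNf
  ring

lemma P1 {N n m : ℕ} (hN : 1 ≤ N) (hn : n ≤ N) :
    ∑ j ∈ Finset.range (N - n + 1), pp N n m j = 1 := by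
  have hNm : ((N:ℝ))^m ≠ 0 := pow_ne_zero _ (by positivity)
  have hcard := Finset.card_eq_sum_card_fiberwise (f := cNf (N := N) (m := m) n)
    (s := Finset.univ) (t := Finset.range (N - n + 1))
    (fun f _ => Finset.mem_range.2 (by have := cNf_le (n := n) f; omega))
  have huniv : (Finset.univ : Finset (Fin m → Fin N)).card = N ^ m := by
    rw [Finset.card_univ, Fintype.card_fun, Fintype.card_fin, Fintype.card_fin]
  simp only [pp]
  rw [← Finset.sum_div, div_eq_one_iff_eq hNm]
  rw [huniv] at hcard
  rw [← Nat.cast_pow, hcard]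
  push_cast
  rfl

lemma pp_nonneg (N n m j : ℕ) : 0 ≤ pp N n m j := by
  unfold pp; positivity

lemma pp_le_one {N n m j : ℕ} (hN : 1 ≤ N) : pp N n m j ≤ 1 := by
  unfold pp
  rw [div_le_one (by positivity)]
  calc ((Finset.univ.filter _).card : ℝ) ≤ ((Finset.univ : Finset (Fin m → Fin N)).card : ℝ) := by
        exact_mod_cast Finset.card_le_card (Finset.filter_subset _ _)
    _ = (N:ℝ)^m := by
        rw [Finset.card_univ, Fintype.card_fun, Fintype.card_fin, Fintype.card_fin]
        push_cast
        rfl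

/-! ### Component identities -/

lemma Cr {N i n : ℕ} (hi : i ≤ N) (hn : n ≤ N) (r : ℝ) :
    r/2 * ((N:ℝ) - i) * ((i:ℝ)/N) * (hh N (i+1) n - hh N i n)
      + r/2 * (i:ℝ) * (((N:ℝ) - i)/N) * (hh N (i-1) n - hh N i n)
    = r * (n.choose 2 : ℝ) / N * (hh N i (n-1) - hh N i n) := by
  rw [Nat.cast_choose_two]
  linear_combination (r * ((n:ℝ)-1)/(2*N)) * M1 (N := N) (i := i) hn
    + (r * ((N:ℝ)-i)/(2*N)) * M2 (N := N) (i := i) hn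
    + (r * ((N:ℝ)-i)/(2*N)) * Q1 (N := N) (i := i) hn

lemma Ck {N i n : ℕ} (hi : i ≤ N) (hn : n ≤ N) (κ : ℝ) :
    κ/2 * ((N:ℝ) - i) * ((i:ℝ)/N) * (((N:ℝ) - i)/N) * (hh N (i+1) n - hh N i n)
      + κ/2 * (i:ℝ) * (((N:ℝ) - i)/N)^2 * (hh N (i-1) n - hh N i n)
    = κ/N * (n.choose 2 : ℝ) * (((N:ℝ) - n)/N) * (hh N i (n+1) - hh N i n)
      + (n.choose 2 : ℝ)/N * κ * (((N:ℝ) - n + 1)/N) * (hh N i (n-1) - hh N i n) := by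
  rw [Nat.cast_choose_two]
  linear_combination (κ * ((n:ℝ)-1) * ((N:ℝ)-n+1)/(2*N^2)) * M1 (N := N) (i := i) hn
    + (κ * ((N:ℝ)-i)^2/(2*N^2)) * M2 (N := N) (i := i) hn
    + (-κ * (n:ℝ) * ((n:ℝ)-1)/(2*N^2)) * R2 hi hn
    + (κ * ((N:ℝ)-i) * ((N:ℝ)-i-n+1)/(2*N^2)) * Q1 (N := N) (i := i) hn

lemma Cu {N i n : ℕ} (hn : n ≤ N) (u ν₀ ν₁ : ℝ) :
    ((N:ℝ) - i) * u * ν₁ * (hh N (i+1) n - hh N i n)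
      + (i:ℝ) * u * ν₀ * (hh N (i-1) n - hh N i n)
    = u * ν₁ * n * (hh N i (n-1) - hh N i n) - u * ν₀ * n * hh N i n := by
  linear_combination (u * ν₁) * M1 (N := N) (i := i) hn
    + (u * ν₀) * M2 (N := N) (i := i) hn

lemma summable_s_pp {N n j : ℕ} (hN : 1 ≤ N) (s : ℕ → ℝ) (hs : ∀ m, 0 ≤ s m)
    (hsum : Summable s) : Summable fun k => s k * pp N n k j :=
  Summable.of_nonneg_of_le (fun k => mul_nonneg (hs k) (pp_nonneg N n k j))
    (fun k => mul_le_of_le_one_right (hs k) (pp_le_one hN)) hsum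

lemma Cs {N i n : ℕ} (hN : 1 ≤ N) (hi : i ≤ N) (hn : n ≤ N) (s : ℕ → ℝ)
    (hs : ∀ m, 0 ≤ s m) (hsum : Summable s) :
    (∑' m : ℕ, s m * (i:ℝ) * (1 - ((i:ℝ)/N)^m)) * (hh N (i-1) n - hh N i n)
    = (n:ℝ) * ∑ j ∈ Finset.range (N - n + 1),
        (∑' k : ℕ, s k * pp N n k j) * (hh N i (n+j) - hh N i n) := by
  rw [← tsum_mul_right]
  have hterm : ∀ m : ℕ, (s m * (i:ℝ) * (1 - ((i:ℝ)/N)^m)) * (hh N (i-1) n - hh N i n)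
      = (n:ℝ) * (s m * (((i:ℝ)/N)^m - 1) * hh N i n) := fun m => by
    linear_combination (s m * (1 - ((i:ℝ)/N)^m)) * M2 (N := N) (i := i) hn
  rw [tsum_congr hterm, tsum_mul_left]
  congr 1
  have step1 : ∀ j ∈ Finset.range (N - n + 1),
      (∑' k : ℕ, s k * pp N n k j) * (hh N i (n+j) - hh N i n)
      = ∑' k : ℕ, s k * pp N n k j * (hh N i (n+j) - hh N i n) := fun j _ =>
    (tsum_mul_right).symm
  rw [Finset.sum_congr rfl step1,
    ← Summable.tsum_finsetSum (fun j _ => ((summable_s_pp hN s hs hsum).mul_right _))]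
  refine (tsum_congr fun k => ?_).symm
  have expand : ∀ j, s k * pp N n k j * (hh N i (n+j) - hh N i n)
      = s k * (pp N n k j * hh N i (n+j)) - s k * (pp N n k j * hh N i n) := fun j => by
    ring
  rw [Finset.sum_congr rfl (fun j _ => expand j), Finset.sum_sub_distrib,
    ← Finset.mul_sum, ← Finset.mul_sum, P2 hN hi hn]
  have h1 : ∑ j ∈ Finset.range (N - n + 1), pp N n k j * hh N i n = hh N i n := by
    rw [← Finset.sum_mul, P1 hN hn, one_mul]
  rw [h1]
  ring

/-! ### Total scalar identity -/

lemma scalar_total {N i n : ℕ} (hN : 1 ≤ N) (hi : i ≤ N) (hn : n ≤ N)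
    (r κ u ν₀ ν₁ : ℝ) (s : ℕ → ℝ) (hs : ∀ m, 0 ≤ s m) (hsum : Summable s) :
    birthX N r κ u ν₁ i * (hh N (i+1) n - hh N i n)
      + deathX N r κ u ν₀ s i * (hh N (i-1) n - hh N i n)
    = (κ/N * (n.choose 2 : ℝ) * (((N:ℝ) - n)/N)) * (hh N i (n+1) - hh N i n)
      + (1/N * (n.choose 2 : ℝ) * (r + κ * (((N:ℝ) - n + 1)/N)) + u * ν₁ * n)
          * (hh N i (n-1) - hh N i n)
      + (n:ℝ) * (∑ j ∈ Finset.range (N - n + 1),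
          (∑' k : ℕ, s k * pp N n k j) * (hh N i (n+j) - hh N i n))
      - u * ν₀ * (n:ℝ) * hh N i n := by
  unfold birthX deathX
  linear_combination Cr hi hn r + Ck hi hn κ + Cu (N := N) (i := i) hn u ν₀ ν₁
    + Cs hN hi hn s hs hsum

/-! ### Row-sum lemmas -/

lemma rowsumX {N : ℕ} (ii : ℕ) (hii : ii ≤ N) (b d : ℝ) (hbN : ii = N → b = 0)
    (hd0 : ii = 0 → d = 0) (g : ℕ → ℝ) :
    ∑ k ∈ range (N+1),
      (if k = ii+1 then b else if k+1 = ii then d else if k = ii then -b-d else 0) * g k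
    = b * (g (ii+1) - g ii) + d * (g (ii-1) - g ii) := by
  have split : ∀ k ∈ range (N+1), (if k = ii+1 then b else if k+1 = ii then d
        else if k = ii then -b-d else 0) * g k
      = (if k = ii+1 then b * g k else 0) + ((if k+1 = ii then d * g k else 0)
        + (if k = ii then (-b-d) * g k else 0)) := by
    intro k _
    split_ifs <;> (first | ring1 | (exfalso; omega))
  rw [Finset.sum_congr rfl split, Finset.sum_add_distrib, Finset.sum_add_distrib]
  have S1 : ∑ k ∈ range (N+1), (if k = ii+1 then b * g k else 0) = b * g (ii+1) := by
    rw [Finset.sum_ite_eq' (range (N+1)) (ii+1) (fun k => b * g k)]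
    rcases eq_or_lt_of_le hii with h | h
    · rw [if_neg (by simp [h]), hbN h, zero_mul]
    · rw [if_pos (Finset.mem_range.2 (by omega))]
  have S2 : ∑ k ∈ range (N+1), (if k+1 = ii then d * g k else 0)
      = d * g (ii-1) := by
    rcases Nat.eq_zero_or_pos ii with h | h
    · rw [Finset.sum_congr rfl (fun k _ => if_neg (by omega)), Finset.sum_const_zero,
        hd0 h, zero_mul]
    · have hc : ∀ k ∈ range (N+1), (if k+1 = ii then d * g k else 0)
          = (if k = ii-1 then d * g k else 0) := fun k _ =>
        if_congr (by omega) rfl rfl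
      rw [Finset.sum_congr rfl hc,
        Finset.sum_ite_eq' (range (N+1)) (ii-1) (fun k => d * g k),
        if_pos (Finset.mem_range.2 (by omega))]
  have S3 : ∑ k ∈ range (N+1), (if k = ii then (-b-d) * g k else 0)
      = (-b-d) * g ii := by
    rw [Finset.sum_ite_eq' (range (N+1)) ii (fun k => (-b-d) * g k),
      if_pos (Finset.mem_range.2 (by omega))]
  rw [S1, S2, S3]
  ring

lemma rowsumZ {N nn : ℕ} (hnn : nn ≤ N) (Ak Bk uu : ℝ) (T : ℕ → ℝ) (g : ℕ → ℝ)
    (hAN : nn = N → Ak = 0) (hB0 : nn = 0 → Bk = 0) :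
    ∑ m ∈ range (N+1),
      (if m = nn then
          -(uu + ∑ m' ∈ range (N+1), (if m' = nn+1 then Ak + nn * T 1
            else if m'+1 = nn then Bk else if nn+2 ≤ m' then nn * T (m' - nn) else 0))
        else (if m = nn+1 then Ak + nn * T 1
            else if m+1 = nn then Bk else if nn+2 ≤ m then nn * T (m - nn) else 0)) * g m
    = Ak * (g (nn+1) - g nn) + Bk * (g (nn-1) - g nn)
      + nn * ∑ j ∈ range (N - nn + 1), T j * (g (nn+j) - g nn)
      - uu * g nn := by
  set q : ℕ → ℝ := fun m => if m = nn+1 then Ak + nn * T 1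
    else if m+1 = nn then Bk else if nn+2 ≤ m then nn * T (m - nn) else 0 with hq
  have qnn : q nn = 0 := by
    rw [hq]
    simp only
    rw [if_neg (by omega), if_neg (by omega), if_neg (by omega)]
  have split1 : ∀ m ∈ range (N+1),
      (if m = nn then -(uu + ∑ m' ∈ range (N+1), q m') else q m) * g m
      = q m * g m + (if m = nn then (-(uu + ∑ m' ∈ range (N+1), q m') - q m) * g m
          else 0) := by
    intro m _
    split_ifs <;> ring
  rw [Finset.sum_congr rfl split1, Finset.sum_add_distrib,
    Finset.sum_ite_eq' (range (N+1)) nn, if_pos (Finset.mem_range.2 (by omega)), qnn]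
  have e : ∑ m ∈ range (N+1), q m * (g m - g nn)
      = ∑ m ∈ range (N+1), q m * g m - (∑ m ∈ range (N+1), q m) * g nn := by
    simp only [mul_sub]
    rw [Finset.sum_sub_distrib, Finset.sum_mul]
  have main : ∑ m ∈ range (N+1), q m * (g m - g nn)
      = Ak * (g (nn+1) - g nn) + Bk * (g (nn-1) - g nn)
        + nn * ∑ j ∈ range (N - nn + 1), T j * (g (nn+j) - g nn) := by
    have split2 : ∀ m ∈ range (N+1), q m * (g m - g nn)
        = (if m = nn+1 then Ak * (g m - g nn) else 0)
          + ((if m+1 = nn then Bk * (g m - g nn) else 0)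
            + (if nn+1 ≤ m then nn * T (m - nn) * (g m - g nn) else 0)) := by
      intro m _
      rw [hq]
      simp only
      split_ifs with h1 h2 h3 h4 h5 <;> try (exfalso; omega)
      · subst h1
        rw [show nn+1-nn = 1 from by omega]
        ring
      · ring
      · ring
      · ring
    rw [Finset.sum_congr rfl split2, Finset.sum_add_distrib, Finset.sum_add_distrib]
    have SA : ∑ m ∈ range (N+1), (if m = nn+1 then Ak * (g m - g nn) else 0)
        = Ak * (g (nn+1) - g nn) := by
      rw [Finset.sum_ite_eq' (range (N+1)) (nn+1) (fun m => Ak * (g m - g nn))]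
      rcases eq_or_lt_of_le hnn with h | h
      · rw [if_neg (by simp [h]), hAN h, zero_mul]
      · rw [if_pos (Finset.mem_range.2 (by omega))]
    have SB : ∑ m ∈ range (N+1), (if m+1 = nn then Bk * (g m - g nn) else 0)
        = Bk * (g (nn-1) - g nn) := by
      rcases Nat.eq_zero_or_pos nn with h | h
      · rw [Finset.sum_congr rfl (fun m _ => if_neg (by omega)), Finset.sum_const_zero,
          hB0 h, zero_mul]
      · have hc : ∀ m ∈ range (N+1), (if m+1 = nn then Bk * (g m - g nn) else 0)
            = (if m = nn-1 then Bk * (g m - g nn) else 0) := fun m _ =>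
          if_congr (by omega) rfl rfl
        rw [Finset.sum_congr rfl hc,
          Finset.sum_ite_eq' (range (N+1)) (nn-1) (fun m => Bk * (g m - g nn)),
          if_pos (Finset.mem_range.2 (by omega))]
    have SC : ∑ m ∈ range (N+1),
          (if nn+1 ≤ m then (nn:ℝ) * T (m - nn) * (g m - g nn) else 0)
        = nn * ∑ j ∈ range (N - nn + 1), T j * (g (nn+j) - g nn) := by
      rw [← Finset.sum_filter]
      have hfil : (range (N+1)).filter (fun m => nn+1 ≤ m) = Finset.Ico (nn+1) (N+1) := by
        ext m
        simp only [Finset.mem_filter, Finset.mem_range, Finset.mem_Ico]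
        omega
      rw [hfil, Finset.sum_Ico_eq_sum_range, show N+1-(nn+1) = N - nn from by omega,
        Finset.sum_range_succ' (fun j => T j * (g (nn+j) - g nn)) (N - nn)]
      simp only [Nat.add_zero, sub_self, mul_zero, add_zero]
      rw [Finset.mul_sum]
      refine Finset.sum_congr rfl fun k _ => ?_
      rw [show nn+1+k-nn = k+1 from by omega, show nn+1+k = nn+(k+1) from by omega]
      ring
    rw [SA, SB, SC]
    ring
  rw [← sub_eq_zero]
  rw [e] at main
  linarith [main]

/-! ### The exponential commuting lemma -/

open NormedSpace in
lemma exp_mul_comm {n o : Type*} [Fintype n] [DecidableEq n] [Fintype o] [DecidableEq o]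
    (A : Matrix n n ℝ) (B : Matrix o o ℝ) (H : Matrix n o ℝ) (hAB : A * H = H * B) :
    exp A * H = H * exp B := by
  letI : SeminormedRing (Matrix n n ℝ) := Matrix.linftyOpSemiNormedRing
  letI : NormedRing (Matrix n n ℝ) := Matrix.linftyOpNormedRing
  letI : NormedAlgebra ℝ (Matrix n n ℝ) := Matrix.linftyOpNormedAlgebra
  letI : SeminormedRing (Matrix o o ℝ) := Matrix.linftyOpSemiNormedRing
  letI : NormedRing (Matrix o o ℝ) := Matrix.linftyOpNormedRing
  letI : NormedAlgebra ℝ (Matrix o o ℝ) := Matrix.linftyOpNormedAlgebra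
  letI : NormedAddCommGroup (Matrix n o ℝ) := Matrix.linftyOpNormedAddCommGroup
  letI : NormedSpace ℝ (Matrix n o ℝ) := Matrix.linftyOpNormedSpace
  have hpow : ∀ k : ℕ, A ^ k * H = H * B ^ k := by
    intro k
    induction k with
    | zero => simp
    | succ k ih =>
        rw [pow_succ, pow_succ, Matrix.mul_assoc, hAB, ← Matrix.mul_assoc, ih,
          Matrix.mul_assoc]
  let Φ : Matrix n n ℝ →L[ℝ] Matrix n o ℝ :=
    LinearMap.toContinuousLinearMap
      { toFun := fun M => M * H
        map_add' := fun M M' => Matrix.add_mul M M' H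
        map_smul' := fun c M => Matrix.smul_mul c M H }
  let Ψ : Matrix o o ℝ →L[ℝ] Matrix n o ℝ :=
    LinearMap.toContinuousLinearMap
      { toFun := fun M => H * M
        map_add' := fun M M' => Matrix.mul_add H M M'
        map_smul' := fun c M => Matrix.mul_smul H c M }
  have h1' := (exp_series_hasSum_exp' (𝕂 := ℝ) A).mapL Φ
  have h2' := (exp_series_hasSum_exp' (𝕂 := ℝ) B).mapL Ψ
  have key : ∀ k : ℕ, Φ (((k.factorial : ℝ))⁻¹ • A ^ k) = Ψ (((k.factorial : ℝ))⁻¹ • B ^ k) := by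
    intro k
    simp only [map_smul]
    congr 1
    exact hpow k
  rw [funext key] at h1'
  exact h1'.unique h2'

end FMD

set_option maxHeartbeats 2000000 in
/-- **Factorial moment duality in semigroup form** (Theorem 2.2):
`exp(t Q_X) H = H exp(t Q_Z)ᵀ` for all `t ≥ 0`. -/
theorem factorial_moment_duality_semigroup
    (N : ℕ) (hN : 1 ≤ N) (r κ u ν₀ ν₁ : ℝ) (s : ℕ → ℝ)
    (hr : 0 ≤ r) (hκ : 0 ≤ κ) (hu : 0 ≤ u)
    (hν₀ : 0 ≤ ν₀) (hν₁ : 0 ≤ ν₁) (hν : ν₀ + ν₁ = 1)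
    (hs0 : s 0 = 0) (hs : ∀ m, 0 ≤ s m)
    (hssum : Summable fun m : ℕ => (m : ℝ) * s m)
    (t : ℝ) (ht : 0 ≤ t) :
    NormedSpace.exp (t • QX N r κ u ν₀ ν₁ s) * Hmat N
      = Hmat N * (NormedSpace.exp (t • QZ N r κ u ν₀ ν₁ s))ᵀ := by
  classical
  have hsummable : Summable s := by
    refine Summable.of_nonneg_of_le hs (fun m => ?_) hssum
    cases m with
    | zero => rw [hs0]; simp
    | succ m =>
        have h1 : (1:ℝ) ≤ ((m+1 : ℕ) : ℝ) := by exact_mod_cast Nat.succ_le_succ (Nat.zero_le m)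
        exact le_mul_of_one_le_left (hs _) h1
  have key : QX N r κ u ν₀ ν₁ s * Hmat N = Hmat N * (QZ N r κ u ν₀ ν₁ s)ᵀ := by
    ext i c
    rw [Matrix.mul_apply, Matrix.mul_apply]
    cases c with
    | none =>
        simp [Hmat, QZ, Matrix.transpose_apply]
    | some n =>
        have hii : (i:ℕ) ≤ N := Nat.lt_succ_iff.1 i.isLt
        have hnn : (n:ℕ) ≤ N := Nat.lt_succ_iff.1 n.isLt
        -- left side
        have eX : ∀ k : Fin (N+1), QX N r κ u ν₀ ν₁ s i k * Hmat N k (some n)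
            = (fun kk : ℕ => (if kk = (i:ℕ)+1 then birthX N r κ u ν₁ (i:ℕ)
                else if kk+1 = (i:ℕ) then deathX N r κ u ν₀ s (i:ℕ)
                else if kk = (i:ℕ) then -birthX N r κ u ν₁ (i:ℕ) - deathX N r κ u ν₀ s (i:ℕ)
                else 0) * FMD.hh N kk (n:ℕ)) (k:ℕ) := by
          intro k
          have h3 : (i = k) = ((k:ℕ) = (i:ℕ)) := by
            rw [Fin.ext_iff]; exact propext eq_comm
          simp only [QX, Matrix.of_apply, Hmat, h3]
          rfl
        have hL : ∑ k : Fin (N+1), QX N r κ u ν₀ ν₁ s i k * Hmat N k (some n)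
            = birthX N r κ u ν₁ (i:ℕ) * (FMD.hh N ((i:ℕ)+1) (n:ℕ) - FMD.hh N (i:ℕ) (n:ℕ))
              + deathX N r κ u ν₀ s (i:ℕ)
                  * (FMD.hh N ((i:ℕ)-1) (n:ℕ) - FMD.hh N (i:ℕ) (n:ℕ)) := by
          rw [Finset.sum_congr rfl (fun k _ => eX k),
            Fin.sum_univ_eq_sum_range (fun kk : ℕ =>
              (if kk = (i:ℕ)+1 then birthX N r κ u ν₁ (i:ℕ)
                else if kk+1 = (i:ℕ) then deathX N r κ u ν₀ s (i:ℕ)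
                else if kk = (i:ℕ) then -birthX N r κ u ν₁ (i:ℕ) - deathX N r κ u ν₀ s (i:ℕ)
                else 0) * FMD.hh N kk (n:ℕ)) (N+1)]
          refine FMD.rowsumX (i:ℕ) hii _ _ ?_ ?_ _
          · intro h
            simp only [birthX, h]
            ring
          · intro h
            simp only [deathX, h]
            push_cast
            simp
        -- right side
        have hopt : ∑ c : Option (Fin (N+1)), qzOff N r κ u ν₀ ν₁ s (n:ℕ) c
            = u * ν₀ * (n:ℕ)
              + ∑ m' ∈ Finset.range (N+1),
                (if m' = (n:ℕ)+1 then
                    (κ/N * ((n:ℕ).choose 2 : ℝ) * (((N:ℝ) - (n:ℕ))/N))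
                      + (n:ℕ) * (∑' k : ℕ, s k * pp N (n:ℕ) k 1)
                  else if m'+1 = (n:ℕ) then
                    (1/N * ((n:ℕ).choose 2 : ℝ) * (r + κ * (((N:ℝ) - (n:ℕ) + 1)/N))
                      + u * ν₁ * (n:ℕ))
                  else if (n:ℕ)+2 ≤ m' then
                    (n:ℕ) * (∑' k : ℕ, s k * pp N (n:ℕ) k (m' - (n:ℕ)))
                  else 0) := by
          rw [Fintype.sum_option]
          congr 1
          rw [← Fin.sum_univ_eq_sum_range]
          exact Finset.sum_congr rfl fun m _ => rfl
        have eZ : ∀ m : Fin (N+1),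
            Hmat N i (some m) * (QZ N r κ u ν₀ ν₁ s)ᵀ (some m) (some n)
            = (fun mm : ℕ =>
                (if mm = (n:ℕ) then
                    -(u * ν₀ * (n:ℕ)
                      + ∑ m' ∈ Finset.range (N+1),
                        (if m' = (n:ℕ)+1 then
                            (κ/N * ((n:ℕ).choose 2 : ℝ) * (((N:ℝ) - (n:ℕ))/N))
                              + (n:ℕ) * (∑' k : ℕ, s k * pp N (n:ℕ) k 1)
                          else if m'+1 = (n:ℕ) then
                            (1/N * ((n:ℕ).choose 2 : ℝ) * (r + κ * (((N:ℝ) - (n:ℕ) + 1)/N))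
                              + u * ν₁ * (n:ℕ))
                          else if (n:ℕ)+2 ≤ m' then
                            (n:ℕ) * (∑' k : ℕ, s k * pp N (n:ℕ) k (m' - (n:ℕ)))
                          else 0))
                  else (if mm = (n:ℕ)+1 then
                      (κ/N * ((n:ℕ).choose 2 : ℝ) * (((N:ℝ) - (n:ℕ))/N))
                        + (n:ℕ) * (∑' k : ℕ, s k * pp N (n:ℕ) k 1)
                    else if mm+1 = (n:ℕ) then
                      (1/N * ((n:ℕ).choose 2 : ℝ) * (r + κ * (((N:ℝ) - (n:ℕ) + 1)/N))
                        + u * ν₁ * (n:ℕ))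
                    else if (n:ℕ)+2 ≤ mm then
                      (n:ℕ) * (∑' k : ℕ, s k * pp N (n:ℕ) k (mm - (n:ℕ)))
                    else 0)) * FMD.hh N (i:ℕ) mm) (m:ℕ) := by
          intro m
          have hcond : (some m = some n) = ((m:ℕ) = (n:ℕ)) := by
            rw [Option.some_inj, Fin.ext_iff]
          simp only [Matrix.transpose_apply, QZ, Matrix.of_apply, Hmat, hcond, hopt]
          rcases eq_or_ne ((m:ℕ)) ((n:ℕ)) with h | h
          · rw [if_pos h, if_pos h]
            exact mul_comm _ _
          · rw [if_neg h, if_neg h]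
            exact mul_comm _ _
        have hR : ∑ d : Option (Fin (N+1)),
              Hmat N i d * (QZ N r κ u ν₀ ν₁ s)ᵀ d (some n)
            = (κ/N * ((n:ℕ).choose 2 : ℝ) * (((N:ℝ) - (n:ℕ))/N))
                  * (FMD.hh N (i:ℕ) ((n:ℕ)+1) - FMD.hh N (i:ℕ) (n:ℕ))
              + (1/N * ((n:ℕ).choose 2 : ℝ) * (r + κ * (((N:ℝ) - (n:ℕ) + 1)/N))
                    + u * ν₁ * (n:ℕ))
                  * (FMD.hh N (i:ℕ) ((n:ℕ)-1) - FMD.hh N (i:ℕ) (n:ℕ))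
              + ((n:ℕ):ℝ) * ∑ j ∈ Finset.range (N - (n:ℕ) + 1),
                  (∑' k : ℕ, s k * pp N (n:ℕ) k j)
                    * (FMD.hh N (i:ℕ) ((n:ℕ)+j) - FMD.hh N (i:ℕ) (n:ℕ))
              - (u * ν₀ * (n:ℕ)) * FMD.hh N (i:ℕ) (n:ℕ) := by
          rw [Fintype.sum_option]
          have h0 : Hmat N i none * (QZ N r κ u ν₀ ν₁ s)ᵀ none (some n) = 0 := by
            simp [Hmat]
          rw [h0, zero_add, Finset.sum_congr rfl (fun m _ => eZ m),
            Fin.sum_univ_eq_sum_range (fun mm : ℕ =>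
                (if mm = (n:ℕ) then
                    -(u * ν₀ * (n:ℕ)
                      + ∑ m' ∈ Finset.range (N+1),
                        (if m' = (n:ℕ)+1 then
                            (κ/N * ((n:ℕ).choose 2 : ℝ) * (((N:ℝ) - (n:ℕ))/N))
                              + (n:ℕ) * (∑' k : ℕ, s k * pp N (n:ℕ) k 1)
                          else if m'+1 = (n:ℕ) then
                            (1/N * ((n:ℕ).choose 2 : ℝ) * (r + κ * (((N:ℝ) - (n:ℕ) + 1)/N))
                              + u * ν₁ * (n:ℕ))
                          else if (n:ℕ)+2 ≤ m' then
                            (n:ℕ) * (∑' k : ℕ, s k * pp N (n:ℕ) k (m' - (n:ℕ)))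
                          else 0))
                  else (if mm = (n:ℕ)+1 then
                      (κ/N * ((n:ℕ).choose 2 : ℝ) * (((N:ℝ) - (n:ℕ))/N))
                        + (n:ℕ) * (∑' k : ℕ, s k * pp N (n:ℕ) k 1)
                    else if mm+1 = (n:ℕ) then
                      (1/N * ((n:ℕ).choose 2 : ℝ) * (r + κ * (((N:ℝ) - (n:ℕ) + 1)/N))
                        + u * ν₁ * (n:ℕ))
                    else if (n:ℕ)+2 ≤ mm then
                      (n:ℕ) * (∑' k : ℕ, s k * pp N (n:ℕ) k (mm - (n:ℕ)))
                    else 0)) * FMD.hh N (i:ℕ) mm) (N+1)]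
          have hA : (n:ℕ) = N →
              κ/N * ((n:ℕ).choose 2 : ℝ) * (((N:ℝ) - (n:ℕ))/N) = 0 := fun h => by
            rw [h]; simp
          have hB : (n:ℕ) = 0 →
              1/N * ((n:ℕ).choose 2 : ℝ) * (r + κ * (((N:ℝ) - (n:ℕ) + 1)/N))
                + u * ν₁ * ((n:ℕ):ℝ) = 0 := fun h => by
            rw [h]; norm_num
          exact FMD.rowsumZ hnn
            (κ/N * ((n:ℕ).choose 2 : ℝ) * (((N:ℝ) - (n:ℕ))/N))
            (1/N * ((n:ℕ).choose 2 : ℝ) * (r + κ * (((N:ℝ) - (n:ℕ) + 1)/N))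
              + u * ν₁ * ((n:ℕ):ℝ))
            (u * ν₀ * ((n:ℕ):ℝ))
            (fun j => ∑' k : ℕ, s k * pp N (n:ℕ) k j)
            (fun mm => FMD.hh N (i:ℕ) mm) hA hB
        rw [hL, hR]
        have := FMD.scalar_total (i := (i:ℕ)) (n := (n:ℕ)) hN hii hnn r κ u ν₀ ν₁ s hs
          hsummable
        linarith [this]
  have h2 : (t • QX N r κ u ν₀ ν₁ s) * Hmat N
      = Hmat N * ((t • QZ N r κ u ν₀ ν₁ s)ᵀ) := by
    rw [Matrix.transpose_smul, Matrix.smul_mul, Matrix.mul_smul, key]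
  rw [← Matrix.exp_transpose]
  exact FMD.exp_mul_comm _ _ _ h2

end
end

section
/- Generator intertwining identity underlying the factorial moment duality (key step for Theorem 2.2): Q_X * H = H * Q_Zᵀ, i.e. for all i ∈ {0,…,N} and all n ∈ {0,…,N} ∪ {Δ}, ∑_{j=0}^{N} Q_X(i,j)·H(j,n) = ∑_{m ∈ {0,…,N}∪{Δ}} Q_Z(n,m)·H(i,m). -/
open scoped BigOperators Matrix

noncomputable section

/-!
Both sides are evaluated against `h(i, n) = i^{\underline n} / N^{\underline n}`. The neutral
and mutation rates are matched by three shift identities of `h`: one in `i`, one in `n`, and one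
in both. For selection, throw `m` balls into `N` boxes of which `n` are already marked: each
throw marks a fresh box with probability `(N - q) / N`, and `(N - q) h(i, q+1) + q h(i, q) =
i h(i, q)`, so the expected value of `h(i, #marked)` after `m` throws is `(i / N)^m h(i, n)`.
On the other side, `i (h(i-1, n) - h(i, n)) = -n h(i, n)` turns the death rate
`s_m i (1 - (i / N)^m)` into the same quantity.
-/

open Finset

lemma sum_fin_ite_val_eq {M : Type*} [AddCommMonoid M] {N c : ℕ} (f : ℕ → M)
    (h : c ≤ N ∨ f c = 0) :
    ∑ m : Fin (N + 1), (if (m : ℕ) = c then f m else 0) = f c := by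
  rw [Fin.sum_univ_eq_sum_range (fun m => if m = c then f m else 0), sum_ite_eq']
  split_ifs with hc
  · rfl
  · exact (h.resolve_left (by simpa [Nat.lt_succ_iff] using hc)).symm

lemma sum_fin_ite_val_add_one_eq {M : Type*} [AddCommMonoid M] {N c : ℕ} (f : ℕ → M)
    (hc : c ≤ N + 1) (h : c = 0 → f 0 = 0) :
    ∑ m : Fin (N + 1), (if (m : ℕ) + 1 = c then f m else 0) = f (c - 1) := by
  rcases c with _ | c
  · simp [h rfl]
  · simp only [Nat.add_right_cancel_iff, Nat.add_sub_cancel]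
    exact sum_fin_ite_val_eq f (Or.inl (by omega))

lemma sum_mul_ite_neg_sum {ι R : Type*} [Fintype ι] [DecidableEq ι] [CommRing R]
    (q v : ι → R) (a : ι) (ha : q a = 0) :
    ∑ c, v c * (if c = a then -∑ c', q c' else q c) = ∑ c, q c * (v c - v a) := by
  have hpt : ∀ c, v c * (if c = a then -∑ c', q c' else q c)
      = q c * v c - if c = a then v a * ∑ c', q c' else 0 := fun c => by
    split_ifs with h
    · subst h; rw [ha]; ring
    · ring
  rw [sum_congr rfl fun c _ => hpt c, sum_sub_distrib, sum_ite_eq', if_pos (mem_univ a), mul_sum,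
    ← sum_sub_distrib]
  exact sum_congr rfl fun c _ => by ring

lemma summable_mul_of_summable_natCast_mul {s x : ℕ → ℝ}
    (hs : Summable fun m : ℕ => (m : ℝ) * s m) {C : ℝ} (hx : ∀ k, |x k| ≤ C) :
    Summable fun k => s k * x k := by
  refine (hs.norm.mul_left C).of_norm_bounded_eventually_nat ?_
  filter_upwards [Filter.eventually_ge_atTop 1] with k hk
  have hC : 0 ≤ C := (abs_nonneg _).trans (hx 0)
  have hk' : (1 : ℝ) ≤ k := by exact_mod_cast hk
  rw [Real.norm_eq_abs, Real.norm_eq_abs, abs_mul, abs_mul, Nat.abs_cast, mul_comm |s k|]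
  calc |x k| * |s k| ≤ C * |s k| := by gcongr; exact hx k
    _ ≤ C * (k * |s k|) := by gcongr; exact le_mul_of_one_le_left (abs_nonneg _) hk'

def dualityFn (N i n : ℕ) : ℝ := (i.descFactorial n : ℝ) / (N.descFactorial n : ℝ)

lemma cast_descFactorial_succ (i n : ℕ) :
    (i.descFactorial (n + 1) : ℝ) = ((i : ℝ) - n) * i.descFactorial n := by
  rw [← descPochhammer_eval_eq_descFactorial ℝ, ← descPochhammer_eval_eq_descFactorial ℝ,
    descPochhammer_succ_eval, mul_comm]

lemma cast_succ_descFactorial_succ (i n : ℕ) :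
    ((i + 1).descFactorial (n + 1) : ℝ) = ((i : ℝ) + 1) * i.descFactorial n := by
  rw [Nat.succ_descFactorial_succ]; push_cast; ring

lemma dualityFn_zero_right (N i : ℕ) : dualityFn N i 0 = 1 := by simp [dualityFn]

lemma sub_mul_dualityFn_succ {N i : ℕ} (hi : i ≤ N) (n : ℕ) :
    ((N : ℝ) - n) * dualityFn N i (n + 1) = ((i : ℝ) - n) * dualityFn N i n := by
  unfold dualityFn
  rw [cast_descFactorial_succ i, cast_descFactorial_succ N]
  rcases eq_or_ne ((N : ℝ) - n) 0 with hNn | hNn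
  · -- at `n = N` the right side vanishes too, since `i ^{\underline N} = 0` unless `i = N`
    have hnN : n = N := by exact_mod_cast (sub_eq_zero.mp hNn).symm
    subst hnN
    rcases hi.lt_or_eq with hlt | rfl
    · simp [Nat.descFactorial_eq_zero_iff_lt.mpr hlt]
    · simp
  · rw [mul_comm _ (N.descFactorial n : ℝ), ← div_div, mul_div_cancel₀ _ hNn, mul_div_assoc]

lemma mul_dualityFn_sub_pred (N i n : ℕ) :
    (i : ℝ) * (dualityFn N i n - dualityFn N (i - 1) n) = n * dualityFn N i n := by
  rcases n with _ | n
  · simp [dualityFn_zero_right]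
  rcases i with _ | i
  · simp [dualityFn]
  unfold dualityFn
  rw [Nat.add_sub_cancel, cast_succ_descFactorial_succ, cast_descFactorial_succ i]
  push_cast; ring

lemma sub_mul_dualityFn_succ_sub {N n : ℕ} (hn : n < N) (i : ℕ) :
    ((N : ℝ) - i) * (dualityFn N (i + 1) (n + 1) - dualityFn N i (n + 1))
      = ((n : ℝ) + 1) * (dualityFn N i n - dualityFn N i (n + 1)) := by
  have hNn : ((N : ℝ) - n) ≠ 0 := sub_ne_zero.mpr (by exact_mod_cast hn.ne')
  have hN : (N.descFactorial n : ℝ) ≠ 0 := by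
    exact_mod_cast (Nat.descFactorial_pos.mpr hn.le).ne'
  unfold dualityFn
  rw [cast_succ_descFactorial_succ, cast_descFactorial_succ i, cast_descFactorial_succ N]
  field_simp
  ring

lemma neutral_mutation_identity {N i n : ℕ} (hi : i ≤ N) (hn : n ≤ N) (r κ u ν₀ ν₁ : ℝ) :
    birthX N r κ u ν₁ i * (dualityFn N (i + 1) n - dualityFn N i n)
      + (r / 2 * i * (((N : ℝ) - i) / N) + κ / 2 * i * (((N : ℝ) - i) / N) ^ 2 + i * u * ν₀)
        * (dualityFn N (i - 1) n - dualityFn N i n)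
      = κ / N * (n.choose 2 : ℝ) * (((N : ℝ) - n) / N) * (dualityFn N i (n + 1) - dualityFn N i n)
        + (1 / N * (n.choose 2 : ℝ) * (r + κ * (((N : ℝ) - n + 1) / N)) + u * ν₁ * n)
          * (dualityFn N i (n - 1) - dualityFn N i n)
        - u * ν₀ * n * dualityFn N i n := by
  rcases n with _ | m
  · simp [dualityFn_zero_right]
  have hpred_i := mul_dualityFn_sub_pred N i (m + 1)
  have hsucc_i := sub_mul_dualityFn_succ_sub (by omega : m < N) i
  have hsucc_n := sub_mul_dualityFn_succ hi m
  have hsucc_n' := sub_mul_dualityFn_succ hi (m + 1)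
  rw [birthX, Nat.cast_choose_two, Nat.add_sub_cancel]
  push_cast at hpred_i hsucc_n' ⊢
  linear_combination
    (r * i / (2 * N) + κ * (N - i) * i / (2 * N ^ 2) + u * ν₁) * hsucc_i
      - (r * (N - i) / (2 * N) + κ * (N - i) ^ 2 / (2 * N ^ 2) + u * ν₀) * hpred_i
      + (κ * (m + 1) * (m - N + i) / (2 * N ^ 2) - r * (m + 1) / (2 * N)) * hsucc_n
      - κ * (m + 1) * m / (2 * N ^ 2) * hsucc_n'

lemma tsum_selection_mul_dualityFn_pred_sub (N i n : ℕ) (s : ℕ → ℝ) :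
    (∑' m, s m * i * (1 - ((i : ℝ) / N) ^ m)) * (dualityFn N (i - 1) n - dualityFn N i n)
      = -(n * dualityFn N i n * ∑' m, s m * (1 - ((i : ℝ) / N) ^ m)) := by
  have hpull : ∑' m, s m * i * (1 - ((i : ℝ) / N) ^ m)
      = i * ∑' m, s m * (1 - ((i : ℝ) / N) ^ m) := by
    rw [← tsum_mul_left]
    exact tsum_congr fun m => by ring
  rw [hpull]
  linear_combination (-∑' m, s m * (1 - ((i : ℝ) / N) ^ m)) * mul_dualityFn_sub_pred N i n

lemma sum_card_insert {α M : Type*} [Fintype α] [DecidableEq α] [AddCommMonoid M]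
    (B : Finset α) (g : ℕ → M) :
    ∑ x, g #(insert x B) = (Fintype.card α - #B) • g (#B + 1) + #B • g #B := by
  simp only [card_insert_eq_ite, apply_ite g]
  rw [sum_ite, sum_const, sum_const, filter_mem_eq_inter, univ_inter, add_comm]
  congr 2
  rw [filter_not, filter_mem_eq_inter, univ_inter, card_sdiff_of_subset (subset_univ B),
    card_univ]

lemma univ_image_cons {α : Type*} [DecidableEq α] {k : ℕ} (x : α) (f : Fin k → α) :
    univ.image (Fin.cons x f : Fin (k + 1) → α) = insert x (univ.image f) := by
  ext y
  simp [Fin.exists_fin_succ, eq_comm]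

lemma sum_card_union_image {α R : Type*} [Fintype α] [DecidableEq α] [CommRing R]
    (g : ℕ → R) (c : R)
    (hg : ∀ q ≤ Fintype.card α, ((Fintype.card α : R) - q) * g (q + 1) + q * g q = c * g q)
    (k : ℕ) (B : Finset α) :
    ∑ f : Fin k → α, g #(B ∪ univ.image f) = c ^ k * g #B := by
  induction k generalizing B with
  | zero => simp
  | succ k ih =>
    rw [← (Fin.consEquiv fun _ => α).sum_comp, Fintype.sum_prod_type]
    change ∑ x, ∑ f, g #(B ∪ univ.image (Fin.cons x f : Fin (k + 1) → α)) = _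
    simp only [univ_image_cons, union_insert, ← insert_union, ih]
    rw [← mul_sum, sum_card_insert, nsmul_eq_mul, nsmul_eq_mul,
      Nat.cast_sub (card_le_univ B), hg _ (card_le_univ B), pow_succ, mul_assoc]

lemma card_filter_le_and_exists_add {N n k : ℕ} (hn : n ≤ N) (f : Fin k → Fin N) :
    #{x : Fin N | n ≤ (x : ℕ) ∧ ∃ y, f y = x} + n
      = #(univ.filter (fun x : Fin N => (x : ℕ) < n) ∪ univ.image f) := by
  have hsplit : (univ.filter (fun x : Fin N => (x : ℕ) < n) ∪ univ.image f)
      = univ.filter (fun x : Fin N => (x : ℕ) < n)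
        ∪ univ.filter (fun x : Fin N => n ≤ (x : ℕ) ∧ ∃ y, f y = x) := by
    ext x
    simp only [mem_union, mem_filter, mem_univ, true_and, mem_image]
    grind
  rw [hsplit, card_union_of_disjoint, Fin.card_filter_val_lt, min_eq_right hn, add_comm]
  rw [disjoint_filter]
  intro x _ hx hx'
  omega

lemma pp_nonneg (N n k j : ℕ) : 0 ≤ pp N n k j := by
  unfold pp; positivity

lemma pp_le_one (N n k j : ℕ) : pp N n k j ≤ 1 := by
  unfold pp
  refine div_le_one_of_le₀ ?_ (by positivity)
  have := card_filter_le (univ : Finset (Fin k → Fin N))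
    fun f => #{x : Fin N | n ≤ (x : ℕ) ∧ ∃ y, f y = x} = j
  rw [card_univ, Fintype.card_fun, Fintype.card_fin, Fintype.card_fin] at this
  exact_mod_cast this

lemma sum_ite_pp_mul {N n : ℕ} (hn : n ≤ N) (k : ℕ) (F : ℕ → ℝ) :
    ∑ m : Fin (N + 1), (if n ≤ (m : ℕ) then pp N n k (m - n) * F m else 0)
      = (∑ f : Fin k → Fin N,
          F #(univ.filter (fun x : Fin N => (x : ℕ) < n) ∪ univ.image f)) / N ^ k := by
  have hpt : ∀ m : Fin (N + 1), (if n ≤ (m : ℕ) then pp N n k (m - n) * F m else 0)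
      = (∑ f : Fin k → Fin N,
          if (m : ℕ) = #{x : Fin N | n ≤ (x : ℕ) ∧ ∃ y, f y = x} + n then F m else 0) / N ^ k := by
    intro m
    unfold pp
    split_ifs with hm
    · rw [← sum_filter, sum_const, nsmul_eq_mul, div_mul_eq_mul_div]
      congr 3
      exact congrArg card (filter_congr fun f _ => by omega)
    · rw [sum_eq_zero fun f _ => if_neg (by omega), zero_div]
  rw [sum_congr rfl fun m _ => hpt m, ← sum_div, sum_comm]
  congr 1
  refine sum_congr rfl fun f _ => ?_
  have hle := card_le_univ (univ.filter (fun x : Fin N => (x : ℕ) < n) ∪ univ.image f)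
  rw [← card_filter_le_and_exists_add hn, Fintype.card_fin] at hle
  rw [sum_fin_ite_val_eq _ (Or.inl hle), card_filter_le_and_exists_add hn]

lemma sum_ite_pp_mul_dualityFn_sub {N n i : ℕ} (hN : 1 ≤ N) (hn : n ≤ N) (hi : i ≤ N) (k : ℕ) :
    ∑ m : Fin (N + 1), (if n ≤ (m : ℕ) then
        pp N n k (m - n) * (dualityFn N i m - dualityFn N i n) else 0)
      = dualityFn N i n * (((i : ℝ) / N) ^ k - 1) := by
  have hrec : ∀ q ≤ Fintype.card (Fin N), ((Fintype.card (Fin N) : ℝ) - q) * dualityFn N i (q + 1)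
      + q * dualityFn N i q = i * dualityFn N i q := fun q _ => by
    rw [Fintype.card_fin]
    linear_combination sub_mul_dualityFn_succ hi q
  have hN0 : (N : ℝ) ≠ 0 := by exact_mod_cast (by omega : N ≠ 0)
  rw [sum_ite_pp_mul hn k fun m => dualityFn N i m - dualityFn N i n, sum_sub_distrib,
    sum_card_union_image _ _ hrec, sum_const, card_univ, Fintype.card_fun, Fintype.card_fin,
    Fintype.card_fin, Fin.card_filter_val_lt, min_eq_right hn, nsmul_eq_mul, Nat.cast_pow, div_pow]
  field_simp

lemma sum_selection_mul_dualityFn_sub {N n i : ℕ} (hN : 1 ≤ N) (hn : n ≤ N) (hi : i ≤ N)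
    {s : ℕ → ℝ} (hs : Summable fun m : ℕ => (m : ℝ) * s m) :
    ∑ m : Fin (N + 1), (if n < (m : ℕ) then
        ((n : ℝ) * ∑' k, s k * pp N n k (m - n)) * (dualityFn N i m - dualityFn N i n) else 0)
      = -(n * dualityFn N i n * ∑' k, s k * (1 - ((i : ℝ) / N) ^ k)) := by
  set v := dualityFn N i
  set G : Fin (N + 1) → ℕ → ℝ := fun m k =>
    if n ≤ (m : ℕ) then pp N n k (m - n) * (v m - v n) else 0
  have hG : ∀ m k, |G m k| ≤ |v m - v n| := fun m k => by
    simp only [G]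
    split_ifs
    · rw [abs_mul, abs_of_nonneg (pp_nonneg ..)]
      exact mul_le_of_le_one_left (abs_nonneg _) (pp_le_one ..)
    · simp
  have hpt : ∀ m : Fin (N + 1), (if n < (m : ℕ) then
      ((n : ℝ) * ∑' k, s k * pp N n k (m - n)) * (v m - v n) else 0)
        = ∑' k, n * (s k * G m k) := fun m => by
    rw [tsum_mul_left]
    simp only [G]
    rcases lt_trichotomy n m with hlt | rfl | hgt
    · simp_rw [if_pos hlt, if_pos hlt.le, ← mul_assoc, tsum_mul_right, mul_assoc]
    · simp
    · simp [not_lt.mpr hgt.le, not_le.mpr hgt]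
  rw [sum_congr rfl fun m _ => hpt m,
    ← Summable.tsum_finsetSum fun m _ =>
      (summable_mul_of_summable_natCast_mul hs (hG m)).mul_left _,
    ← tsum_mul_left, ← tsum_neg]
  refine tsum_congr fun k => ?_
  rw [← mul_sum, ← mul_sum, sum_ite_pp_mul_dualityFn_sub hN hn hi]
  ring

lemma Hmat_some (N : ℕ) (i n : Fin (N + 1)) : Hmat N i (some n) = dualityFn N i n := rfl

lemma Hmat_none (N : ℕ) (i : Fin (N + 1)) : Hmat N i none = 0 := rfl

section Rates

variable {N : ℕ} {r κ u ν₀ ν₁ : ℝ} {s : ℕ → ℝ}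

lemma sum_QX_mul (v : ℕ → ℝ) (i : Fin (N + 1)) :
    ∑ j, QX N r κ u ν₀ ν₁ s i j * v j
      = birthX N r κ u ν₁ i * (v (i + 1) - v i) + deathX N r κ u ν₀ s i * (v (i - 1) - v i) := by
  set b := birthX N r κ u ν₁ i
  set d := deathX N r κ u ν₀ s i
  have hpt : ∀ j : Fin (N + 1), QX N r κ u ν₀ ν₁ s i j * v j
      = (if (j : ℕ) = i + 1 then b * v j else 0) + (if (j : ℕ) + 1 = i then d * v j else 0)
        + (if (j : ℕ) = i then (-b - d) * v j else 0) := fun j => by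
    simp only [QX, Matrix.of_apply, Fin.ext_iff]
    split_ifs <;> first | omega | ring
  have hb : (i : ℕ) + 1 ≤ N ∨ b * v (i + 1) = 0 := by
    rcases Nat.lt_or_ge (i : ℕ) N with h | h
    · exact Or.inl h
    · right
      simp [b, birthX, show (i : ℕ) = N by omega]
  have hd : (i : ℕ) = 0 → d * v 0 = 0 := fun h => by simp [d, deathX, h]
  rw [sum_congr rfl fun j _ => hpt j, sum_add_distrib, sum_add_distrib,
    sum_fin_ite_val_eq (fun j => b * v j) hb,
    sum_fin_ite_val_add_one_eq (fun j => d * v j) (by omega) hd,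
    sum_fin_ite_val_eq (fun j => (-b - d) * v j) (Or.inl (Nat.lt_succ_iff.mp i.isLt))]
  ring

lemma QZ_some (n : Fin (N + 1)) (c : Option (Fin (N + 1))) :
    QZ N r κ u ν₀ ν₁ s (some n) c
      = if c = some n then -∑ c', qzOff N r κ u ν₀ ν₁ s n c' else qzOff N r κ u ν₀ ν₁ s n c :=
  rfl

lemma qzOff_none (n : ℕ) : qzOff N r κ u ν₀ ν₁ s n none = u * ν₀ * n := rfl

lemma qzOff_some_self (n : Fin (N + 1)) : qzOff N r κ u ν₀ ν₁ s n (some n) = 0 := by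
  simp [qzOff]

lemma qzOff_some (n : ℕ) (m : Fin (N + 1)) :
    qzOff N r κ u ν₀ ν₁ s n (some m)
      = (if (m : ℕ) = n + 1 then κ / N * (n.choose 2 : ℝ) * (((N : ℝ) - n) / N) else 0)
        + (if (m : ℕ) + 1 = n then
            1 / N * (n.choose 2 : ℝ) * (r + κ * (((N : ℝ) - n + 1) / N)) + u * ν₁ * n else 0)
        + (if n < (m : ℕ) then n * ∑' k, s k * pp N n k (m - n) else 0) := by
  simp only [qzOff]
  split_ifs with h₁ <;> first | omega | ring1 | (simp only [h₁, Nat.add_sub_cancel_left]; ring1)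

lemma sum_qzOff_some_mul {n : ℕ} (hn : n ≤ N) (v : ℕ → ℝ) :
    ∑ m : Fin (N + 1), qzOff N r κ u ν₀ ν₁ s n (some m) * (v m - v n)
      = κ / N * (n.choose 2 : ℝ) * (((N : ℝ) - n) / N) * (v (n + 1) - v n)
        + (1 / N * (n.choose 2 : ℝ) * (r + κ * (((N : ℝ) - n + 1) / N)) + u * ν₁ * n)
          * (v (n - 1) - v n)
        + ∑ m : Fin (N + 1), (if n < (m : ℕ) then
            ((n : ℝ) * ∑' k, s k * pp N n k (m - n)) * (v m - v n) else 0) := by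
  have hK : n + 1 ≤ N ∨
      κ / N * (n.choose 2 : ℝ) * (((N : ℝ) - n) / N) * (v (n + 1) - v n) = 0 := by
    rcases Nat.lt_or_ge n N with h | h
    · exact Or.inl h
    · right
      simp [show n = N by omega]
  rw [sum_congr rfl fun m _ => by
      rw [qzOff_some, add_mul, add_mul, ite_mul, ite_mul, ite_mul, zero_mul],
    sum_add_distrib, sum_add_distrib, sum_fin_ite_val_eq (fun m => _ * (v m - v n)) hK,
    sum_fin_ite_val_add_one_eq (fun m => _ * (v m - v n)) (by omega) fun h => by simp [h]]

end Rates

theorem generator_intertwining_general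
    (N : ℕ) (hN : 1 ≤ N) (r κ u ν₀ ν₁ : ℝ) (s : ℕ → ℝ)
    (hssum : Summable fun m : ℕ => (m : ℝ) * s m) :
    QX N r κ u ν₀ ν₁ s * Hmat N
      = Hmat N * (QZ N r κ u ν₀ ν₁ s)ᵀ := by
  ext i c
  rcases c with _ | n
  · simp [Matrix.mul_apply, Hmat, QZ]
  have hi : (i : ℕ) ≤ N := Nat.lt_succ_iff.mp i.isLt
  have hn : (n : ℕ) ≤ N := Nat.lt_succ_iff.mp n.isLt
  rw [Matrix.mul_apply, Matrix.mul_apply]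
  simp only [Hmat_some, Matrix.transpose_apply, QZ_some]
  rw [sum_QX_mul (fun j => dualityFn N j n), sum_mul_ite_neg_sum _ _ _ (qzOff_some_self n),
    Fintype.sum_option]
  simp only [Hmat_some, Hmat_none, qzOff_none]
  rw [sum_qzOff_some_mul hn (dualityFn N i), sum_selection_mul_dualityFn_sub hN hn hi hssum, deathX]
  linear_combination neutral_mutation_identity hi hn r κ u ν₀ ν₁
    + tsum_selection_mul_dualityFn_pred_sub N i n s

/-- **Generator intertwining identity** underlying the factorial moment duality
(key step for Theorem 2.2): `Q_X H = H Q_Zᵀ`. -/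
theorem generator_intertwining
    (N : ℕ) (hN : 1 ≤ N) (r κ u ν₀ ν₁ : ℝ) (s : ℕ → ℝ)
    (hr : 0 ≤ r) (hκ : 0 ≤ κ) (hu : 0 ≤ u)
    (hν₀ : 0 ≤ ν₀) (hν₁ : 0 ≤ ν₁) (hν : ν₀ + ν₁ = 1)
    (hs0 : s 0 = 0) (hs : ∀ m, 0 ≤ s m)
    (hssum : Summable fun m : ℕ => (m : ℝ) * s m) :
    QX N r κ u ν₀ ν₁ s * Hmat N
      = Hmat N * (QZ N r κ u ν₀ ν₁ s)ᵀ :=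
  generator_intertwining_general N hN r κ u ν₀ ν₁ s hssum

end
end

section
/- Generator-level moment duality identity underlying Corollary 2.3: for every real x ∈ [0,1] and every n ∈ ℕ, ( −(∑_{m≥1} σ_m·x·(1−x^m)) − θ·ν₀·x + θ·ν₁·(1−x) )·n·x^{n−1} + (1/2)·x·(1−x)·(r + κ·(1−x))·n·(n−1)·x^{n−2} = ∑_{m≥1} σ_m·n·(x^{n+m} − x^n) + κ·binom(n,2)·(x^{n+1} − x^n) + ( binom(n,2)·(r+κ) + θ·ν₁·n )·(x^{n−1} − x^n) − θ·ν₀·n·x^n, where exponents n−1 and n−2 are natural-number (truncated) subtractions (the coefficients n and n(n−1) make the corresponding terms vanish for n ≤ 0 resp. n ≤ 1), and both infinite sums are tsums of absolutely convergent series. This is the identity 𝓛_X(x ↦ x^n)(x) = 𝓛_Z(n ↦ x^n)(n) between the generator of the Wright–Fisher-type diffusion (2.4) applied to monomials and the generator of the branching–coalescing dual chain (2.5). -/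
open scoped BigOperators

/-- **Generator-level moment duality identity** underlying Corollary 2.3:
the generator of the Wright–Fisher-type diffusion (2.4) applied to the monomial
`x ↦ x^n` agrees with the generator of the branching–coalescing dual chain (2.5)
applied to `n ↦ x^n`. -/
theorem generator_moment_duality
    (r κ θ ν₀ ν₁ : ℝ) (σ : ℕ → ℝ)
    (hr : 0 ≤ r) (hκ : 0 ≤ κ) (hθ : 0 ≤ θ) (hν₀ : 0 ≤ ν₀) (hν₁ : 0 ≤ ν₁)
    (hν : ν₀ + ν₁ = 1)
    (hσ0 : σ 0 = 0) (hσ : ∀ m, 0 ≤ σ m)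
    (hσsum : Summable fun m : ℕ => (m : ℝ) * σ m)
    (x : ℝ) (hx : x ∈ Set.Icc (0 : ℝ) 1) (n : ℕ) :
    (-(∑' m : ℕ, σ m * x * (1 - x ^ m)) - θ * ν₀ * x + θ * ν₁ * (1 - x))
        * n * x ^ (n - 1)
      + 1 / 2 * x * (1 - x) * (r + κ * (1 - x)) * ((n : ℝ) * ((n : ℝ) - 1)) * x ^ (n - 2)
    = (∑' m : ℕ, σ m * n * (x ^ (n + m) - x ^ n))
        + κ * (n.choose 2 : ℝ) * (x ^ (n + 1) - x ^ n)
        + ((n.choose 2 : ℝ) * (r + κ) + θ * ν₁ * n) * (x ^ (n - 1) - x ^ n)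
        - θ * ν₀ * n * x ^ n := by
  match n with
  | 0 => simp
  | Nat.succ k =>
    have key : (∑' m : ℕ, σ m * (k + 1 : ℕ) * (x ^ (k + 1 + m) - x ^ (k + 1)))
        = (-(((k : ℝ) + 1) * x ^ k)) * ∑' m : ℕ, σ m * x * (1 - x ^ m) := by
      rw [← tsum_mul_left]
      refine tsum_congr fun m => ?_
      rw [pow_add, pow_succ]
      push_cast
      ring
    match k with
    | 0 =>
      simp only [Nat.cast_one] at key ⊢
      norm_num at key ⊢
      rw [key]; ring
    | Nat.succ j =>
      have hc : ((j + 2).choose 2 : ℝ) = ((j : ℝ) + 2) * ((j : ℝ) + 1) / 2 := by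
        rw [Nat.cast_choose_two]; push_cast; ring
      have h1 : j + 1 + 1 - 1 = j + 1 := rfl
      have h2 : j + 1 + 1 - 2 = j := rfl
      rw [h1, h2] at *
      rw [key, hc]
      push_cast
      rw [pow_succ, pow_succ, pow_succ]
      ring
end

section
/- Counting formula for sampling with replacement (equation (2.3) for p^n_{mj}): Let N, n, m, j ∈ ℕ with n ≤ N. Then the number of functions f : Fin m → Fin N such that exactly j of the last N−n elements of Fin N lie in the range of f equals binom(N−n, j) · ∑_{ℓ=j}^{m} binom(m,ℓ) · Surj(ℓ,j) · n^{m−ℓ}. (Equivalently, this number equals C^n_{mj} = (N−n)^{\underline{j}} ∑_{ℓ=j}^{m} binom(m,ℓ) S(ℓ,j) n^{m−ℓ} with S the Stirling numbers of the second kind, since j!·S(ℓ,j) = Surj(ℓ,j) and (N−n)^{\underline{j}} = j!·binom(N−n,j).) -/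
open scoped BigOperators

/-- `surjCount l j`: number of surjective functions from `Fin l` onto `Fin j`. -/
def surjCount (l j : ℕ) : ℕ :=
  (Finset.univ.filter fun f : Fin l → Fin j => Function.Surjective f).card

/-- `hitCount N n m j`: number of functions `f : Fin m → Fin N` such that exactly `j`
of the last `N - n` elements of `Fin N` (those with indices in `{n, …, N-1}`) lie
in the range of `f`. -/
def hitCount (N n m j : ℕ) : ℕ :=
  (Finset.univ.filter fun f : Fin m → Fin N =>
    (Finset.univ.filter fun x : Fin N => n ≤ (x : ℕ) ∧ ∃ y, f y = x).card = j).card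

open Finset Function

lemma surjCount_eq_zero {l j : ℕ} (h : l < j) : surjCount l j = 0 := by
  rw [surjCount, Finset.card_eq_zero, Finset.filter_eq_empty_iff]
  intro f _ hf
  have := Fintype.card_le_of_surjective f hf
  simp only [Fintype.card_fin] at this
  omega

lemma card_surj_eq (α β : Type*) [Fintype α] [Fintype β] [DecidableEq α] [DecidableEq β] :
    Fintype.card {f : α → β // Function.Surjective f}
      = surjCount (Fintype.card α) (Fintype.card β) := by
  rw [surjCount, ← Fintype.card_subtype]
  refine Fintype.card_congr (Equiv.subtypeEquiv
    (Equiv.arrowCongr (Fintype.equivFin α) (Fintype.equivFin β)) (fun f => ?_))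
  show Surjective f ↔ Surjective ((Fintype.equivFin β) ∘ f ∘ (Fintype.equivFin α).symm)
  rw [Equiv.comp_surjective, Equiv.surjective_comp]

lemma fiber_card (N n m : ℕ) (hn : n ≤ N) (T : Finset (Fin N)) (L : Finset (Fin m))
    (hT : ∀ x ∈ T, n ≤ (x : ℕ)) :
    (Finset.univ.filter fun f : Fin m → Fin N =>
        (∀ y, n ≤ ((f y : Fin N) : ℕ) ↔ y ∈ L) ∧ L.image f = T).card
      = surjCount L.card T.card * n ^ (m - L.card) := by
  classical
  rw [← Fintype.card_subtype]
  have e : {f : Fin m → Fin N // (∀ y, n ≤ ((f y : Fin N) : ℕ) ↔ y ∈ L) ∧ L.image f = T}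
      ≃ {g : ↥L → ↥T // Function.Surjective g} × (↥(Lᶜ) → Fin n) := by
    refine
      { toFun := fun f =>
          (⟨fun y => ⟨f.1 y.1, by
              have := Finset.mem_image_of_mem f.1 y.2; rwa [f.2.2] at this⟩, ?_⟩,
           fun y => ⟨(f.1 y.1 : ℕ), ?_⟩)
        invFun := fun p =>
          ⟨fun y => if h : y ∈ L then (p.1.1 ⟨y, h⟩ : Fin N)
            else ⟨((p.2 ⟨y, by simpa using h⟩ : Fin n) : ℕ), lt_of_lt_of_le (Fin.is_lt _) hn⟩,
           ?_, ?_⟩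
        left_inv := ?_
        right_inv := ?_ }
    · -- surjectivity
      rintro ⟨t, ht⟩
      rw [← f.2.2] at ht
      obtain ⟨y, hy, hfy⟩ := Finset.mem_image.1 ht
      exact ⟨⟨y, hy⟩, Subtype.ext hfy⟩
    · -- f y < n for y ∉ L
      have hy' : y.1 ∉ L := Finset.mem_compl.1 y.2
      have := (f.2.1 y.1).not.2 hy'
      omega
    · -- first conjunct of invFun
      intro y
      by_cases h : y ∈ L
      · simp only [dif_pos h]
        exact ⟨fun _ => h, fun _ => hT _ (p.1.1 ⟨y, h⟩).2⟩
      · simp only [dif_neg h]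
        constructor
        · intro hle
          exact absurd hle (by simpa using (Fin.is_lt (p.2 ⟨y, by simpa using h⟩)).not_ge)
        · intro hy; exact absurd hy h
    · -- second conjunct of invFun : image = T
      ext x
      simp only [Finset.mem_image]
      constructor
      · rintro ⟨y, hy, rfl⟩
        simp only [dif_pos hy]
        exact (p.1.1 ⟨y, hy⟩).2
      · intro hx
        obtain ⟨y, hy⟩ := p.1.2 ⟨x, hx⟩
        exact ⟨y.1, y.2, by simp only [dif_pos y.2, hy]⟩
    · -- left_inv
      rintro ⟨f, hf⟩
      ext y
      by_cases h : y ∈ L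
      · simp [dif_pos h]
      · simp [dif_neg h]
    · -- right_inv
      rintro ⟨⟨g, hg⟩, h⟩
      refine Prod.ext ?_ ?_
      · refine Subtype.ext (funext fun y => Subtype.ext ?_)
        simp [dif_pos y.2]
      · funext y
        have hy' : y.1 ∉ L := Finset.mem_compl.1 y.2
        apply Fin.ext
        simp [dif_neg hy']
  rw [Fintype.card_congr e, Fintype.card_prod, card_surj_eq, Fintype.card_coe,
    Fintype.card_coe, Fintype.card_fun, Fintype.card_fin, Fintype.card_coe,
    Finset.card_compl, Fintype.card_fin]

/-- **Counting formula for sampling with replacement** (equation (2.3) for `p^n_{mj}`):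
the number of functions `f : Fin m → Fin N` hitting exactly `j` of the last `N - n`
elements equals `C(N-n, j) · ∑_{ℓ=j}^{m} C(m,ℓ) · Surj(ℓ,j) · n^{m-ℓ}`. -/
theorem counting_formula (N n m j : ℕ) (hn : n ≤ N) :
    hitCount N n m j
      = (N - n).choose j *
          ∑ l ∈ Finset.Icc j m, m.choose l * surjCount l j * n ^ (m - l) := by
  classical
  set High : Finset (Fin N) := Finset.univ.filter fun x => n ≤ (x : ℕ) with hHigh
  have hHighCard : High.card = N - n := by
    rcases eq_or_lt_of_le hn with rfl | h
    · have : High = ∅ := by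
        rw [Finset.filter_eq_empty_iff]
        intro x _
        exact (x.is_lt).not_ge
      simp [this]
    · have : High = Finset.Ici (⟨n, h⟩ : Fin N) := by
        ext x
        simp [hHigh, Fin.le_def]
      rw [this, Fin.card_Ici]
  set hitSet : (Fin m → Fin N) → Finset (Fin N) :=
    fun f => Finset.univ.filter fun x : Fin N => n ≤ (x : ℕ) ∧ ∃ y, f y = x with hhitSet
  have hsub : ∀ f, hitSet f ⊆ High := by
    intro f x hx
    rw [hhitSet] at hx
    rw [hHigh]
    rw [Finset.mem_filter] at hx ⊢
    exact ⟨hx.1, hx.2.1⟩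
  -- Step 1: fiber over the hit set T
  have h1 : hitCount N n m j = ∑ T ∈ High.powersetCard j,
      (Finset.univ.filter fun f : Fin m → Fin N => hitSet f = T).card := by
    rw [hitCount]
    rw [Finset.card_eq_sum_card_fiberwise (f := hitSet) (t := High.powersetCard j)
      (fun f hf => Finset.mem_powersetCard.2 ⟨hsub f, (Finset.mem_filter.1 hf).2⟩)]
    refine Finset.sum_congr rfl fun T hT => ?_
    congr 1
    rw [Finset.filter_filter]
    ext f
    simp only [Finset.mem_filter, Finset.mem_univ, true_and]
    constructor
    · exact fun h => h.2
    · intro h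
      exact ⟨h ▸ (Finset.mem_powersetCard.1 hT).2, h⟩
  -- Step 2: per T, fiber over L = preimage of the high part
  have h2 : ∀ T ∈ High.powersetCard j,
      (Finset.univ.filter fun f : Fin m → Fin N => hitSet f = T).card
        = ∑ L ∈ (Finset.univ : Finset (Fin m)).powerset,
            surjCount L.card j * n ^ (m - L.card) := by
    intro T hT
    obtain ⟨hTsub, hTcard⟩ := Finset.mem_powersetCard.1 hT
    have hTn : ∀ x ∈ T, n ≤ (x : ℕ) := fun x hx =>
      (Finset.mem_filter.1 (hTsub hx)).2
    rw [Finset.card_eq_sum_card_fiberwise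
      (f := fun f : Fin m → Fin N => Finset.univ.filter fun y => n ≤ ((f y : Fin N) : ℕ))
      (t := (Finset.univ : Finset (Fin m)).powerset)
      (fun f _ => Finset.mem_powerset.2 (Finset.subset_univ _))]
    refine Finset.sum_congr rfl fun L _ => ?_
    rw [Finset.filter_filter]
    rw [← hTcard, ← fiber_card N n m hn T L hTn]
    congr 1
    ext f
    simp only [Finset.mem_filter, Finset.mem_univ, true_and]
    have hpre : (Finset.univ.filter fun y => n ≤ ((f y : Fin N) : ℕ)) = L
        ↔ ∀ y, n ≤ ((f y : Fin N) : ℕ) ↔ y ∈ L := by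
      constructor
      · intro h y
        rw [← h]
        simp
      · intro h
        ext y
        simp [h y]
    constructor
    · rintro ⟨hhit, hLf⟩
      rw [hpre] at hLf
      refine ⟨hLf, ?_⟩
      rw [← hhit]
      ext x
      simp only [hhitSet, Finset.mem_filter, Finset.mem_univ, true_and, Finset.mem_image]
      constructor
      · rintro ⟨y, hy, rfl⟩
        exact ⟨(hLf y).2 hy, y, rfl⟩
      · rintro ⟨hx, y, rfl⟩
        exact ⟨y, (hLf y).1 hx, rfl⟩
    · rintro ⟨hLf, himg⟩
      refine ⟨?_, hpre.2 hLf⟩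
      rw [← himg]
      ext x
      simp only [hhitSet, Finset.mem_filter, Finset.mem_univ, true_and, Finset.mem_image]
      constructor
      · rintro ⟨hx, y, rfl⟩
        exact ⟨y, (hLf y).1 hx, rfl⟩
      · rintro ⟨y, hy, rfl⟩
        exact ⟨(hLf y).2 hy, y, rfl⟩
  -- Step 3: collapse the sum over subsets by cardinality
  have h3 : ∑ L ∈ (Finset.univ : Finset (Fin m)).powerset,
        surjCount L.card j * n ^ (m - L.card)
      = ∑ l ∈ Finset.Icc j m, m.choose l * surjCount l j * n ^ (m - l) := by
    rw [Finset.sum_powerset_apply_card (fun l => surjCount l j * n ^ (m - l))]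
    simp only [Finset.card_univ, Fintype.card_fin, smul_eq_mul]
    rw [← Finset.sum_subset (s₁ := Finset.Icc j m) (s₂ := Finset.range (m + 1))
      (fun x hx => Finset.mem_range.2 (Nat.lt_succ_of_le (Finset.mem_Icc.1 hx).2))
      (fun x hx hx' => ?_)]
    · exact Finset.sum_congr rfl fun l _ => by ring
    · have hxm : x ≤ m := Nat.lt_succ_iff.1 (Finset.mem_range.1 hx)
      have hxj : x < j := by
        by_contra h
        exact hx' (Finset.mem_Icc.2 ⟨le_of_not_gt h, hxm⟩)
      rw [surjCount_eq_zero hxj]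
      ring
  rw [h1, Finset.sum_congr rfl h2, Finset.sum_const, Finset.card_powersetCard, hHighCard,
    smul_eq_mul, h3]
end
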